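/- arXiv:2209.12998 — 2 statements merged into one kernel-verified Lean document; each statement's English description precedes it below -/
import Mathlib

section
/- Let V be a vector space over ℂ, let ω : V → V → ℂ be a ℂ-bilinear alternating nondegenerate form, and for a subspace N ⊆ V write N^⊥ω := {v ∈ V | ω n v = 0 for all n ∈ N} for its ω-orthogonal. Let L ⊆ V be a ℂ-subspace with L = L^⊥ω (a complex Lagrangian subspace). Then for every nonzero ℏ ∈ ℂ, the real subspace obtained from L by restriction of scalars to ℝ equals its own orthogonal with respect to the real bilinear form ω_ℝ(v, w) := Re(ℏ * ω v w); that is, L is a real Lagrangian subspace for Re(ℏω). -/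
/-- If `L` is a complex Lagrangian subspace of a complex symplectic vector space `(V, ω)`
(i.e. `L` equals its own `ω`-orthogonal), then for every `ℏ ≠ 0`, the real subspace
underlying `L` equals its own orthogonal with respect to the real bilinear form
`(v, w) ↦ Re (ℏ * ω v w)`; that is, `L` is a real Lagrangian subspace for `Re (ℏ ω)`. -/
theorem complexLagrangian_isRealLagrangian
    {V : Type*} [AddCommGroup V] [Module ℝ V] [Module ℂ V] [IsScalarTower ℝ ℂ V]
    (ω : V →ₗ[ℂ] V →ₗ[ℂ] ℂ)
    (halt : ∀ v : V, ω v v = 0)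
    (hnd : ∀ v : V, (∀ w : V, ω v w = 0) → v = 0)
    (L : Submodule ℂ V)
    (hL : (L : Set V) = {v : V | ∀ n ∈ L, ω n v = 0})
    (ℏ : ℂ) (hℏ : ℏ ≠ 0) :
    ((L.restrictScalars ℝ : Submodule ℝ V) : Set V) =
      {v : V | ∀ n ∈ L.restrictScalars ℝ, (ℏ * ω n v).re = 0} := by
  ext v
  simp only [SetLike.mem_coe, Submodule.restrictScalars_mem, Set.mem_setOf_eq]
  constructor
  · intro hv n hn
    have : ω n v = 0 := by
      have : v ∈ {v : V | ∀ n ∈ L, ω n v = 0} := hL ▸ hv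
      exact this n hn
    simp [this]
  · intro hv
    have hmem : v ∈ {v : V | ∀ n ∈ L, ω n v = 0} := by
      intro n hn
      have h1 : (ℏ * ω n v).re = 0 := hv n hn
      have h2 : (ℏ * ω ((Complex.I : ℂ) • n) v).re = 0 := hv _ (L.smul_mem _ hn)
      have h2' : (Complex.I * (ℏ * ω n v)).re = 0 := by
        simpa [mul_comm, mul_assoc, mul_left_comm] using h2
      have hz : ℏ * ω n v = 0 := by
        apply Complex.ext
        · exact h1
        · have := h2'
          simp [Complex.mul_re] at this ⊢
          linarith
      have : ω n v = 0 := by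
        rcases mul_eq_zero.mp hz with h | h
        · exact absurd h hℏ
        · exact h
      exact this
    have : v ∈ (L : Set V) := hL ▸ hmem
    exact this
end

section
/- Let T be a triangulated category equipped with a t-structure given by full subcategories (T^{≤0}, T^{≥0}), with truncation functor τ^{≤0} (right adjoint to the inclusion T^{≤0} ⊆ T). Let I ⊆ T be a thick subcategory (a triangulated full subcategory closed under direct summands). Then the pair of full subcategories (T^{≤0} ∩ I, T^{≥0} ∩ I) determines a t-structure on the triangulated category I if and only if τ^{≤0} X ∈ I for every X ∈ I. -/
/-! In a triangle `K' → X → K''⟦-1⟧ → K'⟦1⟧` with `K'' ∈ tge`, the map `K' → X` is, like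
`τ X → X`, a coreflection of `X` into `tle`: maps from `tle` lift through it because they vanish
into `K''⟦-1⟧`, and uniquely because they vanish into `K''⟦-1⟧⟦-1⟧ ∈ tge`. If moreover
`K' ∈ tle` then `K' ≅ τ X`, so truncations of objects of `I` lie in `I` exactly when
their truncation triangles do; the third vertex then lies in `I` by two-out-of-three. -/

open CategoryTheory CategoryTheory.Limits CategoryTheory.Pretriangulated

namespace TStructureStmt

variable (C : Type*) [Category C] [Preadditive C] [HasZeroObject C] [HasShift C ℤ]
  [∀ n : ℤ, (shiftFunctor C n).Additive] [Pretriangulated C]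

/-- The pair of full subcategories `(tle, tge)` determines a t-structure on the
triangulated category `C` (conditions (i), (ii), (iii) of BBD):
(i) `Hom(K', K''[-1]) = 0` for `K' ∈ tle`, `K'' ∈ tge`;
(ii) `tle` is stable by `[1]` and `tge` by `[-1]`;
(iii) every `K` sits in a distinguished triangle `K' → K → K''[-1] → K'[1]`
with `K' ∈ tle` and `K'' ∈ tge`. -/
def IsTStructure (tle tge : C → Prop) : Prop :=
  (∀ (K' K'' : C), tle K' → tge K'' → ∀ f : K' ⟶ K''⟦(-1 : ℤ)⟧, f = 0) ∧
  (∀ K : C, tle K → tle (K⟦(1 : ℤ)⟧)) ∧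
  (∀ K : C, tge K → tge (K⟦(-1 : ℤ)⟧)) ∧
  (∀ K : C, ∃ (K' K'' : C) (f : K' ⟶ K) (g : K ⟶ K''⟦(-1 : ℤ)⟧)
      (h : K''⟦(-1 : ℤ)⟧ ⟶ K'⟦(1 : ℤ)⟧),
    tle K' ∧ tge K'' ∧ Triangle.mk f g h ∈ distTriang C)

/-- The pair of full subcategories `(tle ∩ J, tge ∩ J)` determines a t-structure on the
full triangulated subcategory of `C` on the objects satisfying `J`: the BBD conditions
(i), (ii), (iii), with all objects constrained to lie in `J` and the truncation
triangles required to lie in the subcategory. -/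
def IsTStructureOn (J tle tge : C → Prop) : Prop :=
  (∀ (K' K'' : C), J K' → J K'' → tle K' → tge K'' → ∀ f : K' ⟶ K''⟦(-1 : ℤ)⟧, f = 0) ∧
  (∀ K : C, J K → tle K → tle (K⟦(1 : ℤ)⟧)) ∧
  (∀ K : C, J K → tge K → tge (K⟦(-1 : ℤ)⟧)) ∧
  (∀ K : C, J K → ∃ (K' K'' : C) (f : K' ⟶ K) (g : K ⟶ K''⟦(-1 : ℤ)⟧)
      (h : K''⟦(-1 : ℤ)⟧ ⟶ K'⟦(1 : ℤ)⟧),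
    J K' ∧ J K'' ∧ tle K' ∧ tge K'' ∧ Triangle.mk f g h ∈ distTriang C)

def IsCoreflection {D : Type*} [Category D] (P : D → Prop) {K X : D} (f : K ⟶ X) : Prop :=
  ∀ A, P A → ∀ φ : A ⟶ X, ∃! ψ : A ⟶ K, ψ ≫ f = φ

lemma IsCoreflection.nonempty_iso {D : Type*} [Category D] {P : D → Prop} {X K L : D}
    {f : K ⟶ X} {g : L ⟶ X} (hf : IsCoreflection P f) (hg : IsCoreflection P g)
    (hK : P K) (hL : P L) : Nonempty (K ≅ L) := by
  obtain ⟨u, hu, -⟩ := hg K hK f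
  obtain ⟨v, hv, -⟩ := hf L hL g
  have huv : u ≫ v = 𝟙 K :=
    (hf K hK f).unique (by rw [Category.assoc, hv, hu]) (Category.id_comp f)
  have hvu : v ≫ u = 𝟙 L :=
    (hg L hL g).unique (by rw [Category.assoc, hu, hv]) (Category.id_comp g)
  exact ⟨⟨u, v, huv, hvu⟩⟩

variable {C} in
lemma isCoreflection_of_distTriang {tle tge : C → Prop}
    (hortho : ∀ (K' K'' : C), tle K' → tge K'' → ∀ f : K' ⟶ K''⟦(-1 : ℤ)⟧, f = 0)
    (hshift : ∀ K : C, tge K → tge (K⟦(-1 : ℤ)⟧))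
    {X K' K'' : C} {f : K' ⟶ X} {g : X ⟶ K''⟦(-1 : ℤ)⟧}
    {h : K''⟦(-1 : ℤ)⟧ ⟶ K'⟦(1 : ℤ)⟧} (hT : Triangle.mk f g h ∈ distTriang C)
    (hK'' : tge K'') : IsCoreflection tle f := by
  intro A hA φ
  obtain ⟨ψ, hψ⟩ : ∃ ψ : A ⟶ K', φ = ψ ≫ f :=
    Triangle.coyoneda_exact₂ _ hT φ (hortho A K'' hA hK'' _)
  refine ⟨ψ, hψ.symm, fun ψ' (hψ' : ψ' ≫ f = φ) => ?_⟩
  have hdiff : (ψ' - ψ) ≫ f = 0 := by rw [Preadditive.sub_comp, hψ', ← hψ, sub_self]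
  obtain ⟨w, hw⟩ := Triangle.coyoneda_exact₂ _ (inv_rot_of_distTriang _ hT) (ψ' - ψ) hdiff
  have hw0 : w = 0 := hortho A _ hA (hshift K'' hK'') w
  rw [hw0, zero_comp] at hw
  exact sub_eq_zero.mp hw

theorem tStructure_restricts_to_thick_iff_truncation_stable
    (tle tge : C → Prop) (ht : IsTStructure C tle tge)
    (τ : C ⥤ C) (ε : ∀ X : C, τ.obj X ⟶ X)
    (hτle : ∀ X : C, tle (τ.obj X))
    (hadj : ∀ (A X : C), tle A → ∀ f : A ⟶ X, ∃! g : A ⟶ τ.obj X, g ≫ ε X = f)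
    (I : ObjectProperty C) [I.IsTriangulated] [I.IsClosedUnderIsomorphisms] :
    IsTStructureOn C I tle tge ↔ ∀ X : C, I X → I (τ.obj X) := by
  obtain ⟨hortho, hle_shift, hge_shift, htriang⟩ := ht
  have hiso : ∀ {X K' K'' : C} {f : K' ⟶ X} {g : X ⟶ K''⟦(-1 : ℤ)⟧}
      {h : K''⟦(-1 : ℤ)⟧ ⟶ K'⟦(1 : ℤ)⟧}, Triangle.mk f g h ∈ distTriang C →
      tle K' → tge K'' → Nonempty (K' ≅ τ.obj X) := fun hT hK' hK'' =>
    (isCoreflection_of_distTriang hortho hge_shift hT hK'').nonempty_iso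
      (fun A hA => hadj A _ hA) hK' (hτle _)
  constructor
  · rintro ⟨-, -, -, hItriang⟩ X hX
    obtain ⟨K', K'', f, g, h, hK'I, -, hK', hK'', hT⟩ := hItriang X hX
    obtain ⟨e⟩ := hiso hT hK' hK''
    exact I.prop_of_iso e hK'I
  · intro hτI
    refine ⟨fun K' K'' _ _ => hortho K' K'', fun K _ => hle_shift K, fun K _ => hge_shift K,
      fun X hX => ?_⟩
    obtain ⟨K', K'', f, g, h, hK', hK'', hT⟩ := htriang X
    obtain ⟨e⟩ := hiso hT hK' hK''
    have hK'I : I K' := I.prop_of_iso e.symm (hτI X hX)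
    have hK''I : I K'' := (I.prop_shift_iff_of_isStableUnderShift K'' (-1)).1
      (I.ext_of_isTriangulatedClosed₃ _ hT hK'I hX)
    exact ⟨K', K'', f, g, h, hK'I, hK''I, hK', hK'', hT⟩

end TStructureStmt
end
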